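/- arXiv:1108.3126 — 3 statements merged into one kernel-verified Lean document; each statement's English description precedes it below -/
import Mathlib

section
/- Partial correctness of the EKW machine: for every regular expression e over Σ and every string w over Σ, the matching relation e ⊨ w holds if and only if there is a finite run of the EKW machine ⟨e | [] | w⟩ → ⋯ → ⟨ε | [] | ε⟩ ending in the accepting configuration ⟨ε | [] | ε⟩. -/
set_option autoImplicit false

namespace RegexMachines

/-- Regular expressions over an alphabet `α`. -/
inductive RE (α : Type) : Type where
  | eps : RE α
  | ch (a : α) : RE α
  | star (e : RE α) : RE α
  | seq (e₁ e₂ : RE α) : RE α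
  | alt (e₁ e₂ : RE α) : RE α

/-- The big-step matching relation `e ⊨ w`. -/
inductive Matches {α : Type} : RE α → List α → Prop where
  | eps : Matches RE.eps []
  | ch (a : α) : Matches (RE.ch a) [a]
  | seq {e₁ e₂ : RE α} {w₁ w₂ : List α} :
      Matches e₁ w₁ → Matches e₂ w₂ → Matches (RE.seq e₁ e₂) (w₁ ++ w₂)
  | starNil {e : RE α} : Matches (RE.star e) []
  | starCons {e : RE α} {w₁ w₂ : List α} :
      Matches e w₁ → Matches (RE.star e) w₂ → Matches (RE.star e) (w₁ ++ w₂)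
  | altL {e₁ e₂ : RE α} {w : List α} : Matches e₁ w → Matches (RE.alt e₁ e₂) w
  | altR {e₁ e₂ : RE α} {w : List α} : Matches e₂ w → Matches (RE.alt e₁ e₂) w

/-- Configurations `⟨e | k | w⟩` of the EKW machine. -/
abbrev EKWConfig (α : Type) : Type := RE α × List (RE α) × List α

/-- Transitions of the EKW machine. -/
inductive EKWStep {α : Type} : EKWConfig α → EKWConfig α → Prop where
  | altL {e₁ e₂ : RE α} {k : List (RE α)} {w : List α} :
      EKWStep (RE.alt e₁ e₂, k, w) (e₁, k, w)
  | altR {e₁ e₂ : RE α} {k : List (RE α)} {w : List α} :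
      EKWStep (RE.alt e₁ e₂, k, w) (e₂, k, w)
  | seq {e₁ e₂ : RE α} {k : List (RE α)} {w : List α} :
      EKWStep (RE.seq e₁ e₂, k, w) (e₁, e₂ :: k, w)
  | starIn {e : RE α} {k : List (RE α)} {w : List α} :
      EKWStep (RE.star e, k, w) (e, RE.star e :: k, w)
  | starOut {e : RE α} {k : List (RE α)} {w : List α} :
      EKWStep (RE.star e, k, w) (RE.eps, k, w)
  | ch {a : α} {k : List (RE α)} {w : List α} :
      EKWStep (RE.ch a, k, a :: w) (RE.eps, k, w)
  | pop {e : RE α} {k : List (RE α)} {w : List α} :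
      EKWStep (RE.eps, e :: k, w) (e, k, w)

/-- Syntax-tree nodes stored in a heap; pointer arguments are natural numbers. -/
inductive Node (α : Type) : Type where
  | eps : Node α
  | ch (a : α) : Node α
  | alt (p₁ p₂ : ℕ) : Node α
  | seq (p₁ p₂ : ℕ) : Node α
  | star (p₁ : ℕ) : Node α

/-- A heap is a partial function from (non-null) pointers to nodes.
The distinguished null pointer is modelled by `none : Option ℕ` wherever a
pointer-or-null is needed. -/
abbrev Heap (α : Type) : Type := ℕ → Option (Node α)

/-- Disjointness of two heaps (the `⊗` side condition). -/
def hDisj {α : Type} (π₁ π₂ : Heap α) : Prop := ∀ q : ℕ, π₁ q = none ∨ π₂ q = none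

/-- Union of two heaps (`⊗`). -/
def hUnion {α : Type} (π₁ π₂ : Heap α) : Heap α :=
  fun q => (π₁ q).orElse (fun _ => π₂ q)

/-- The singleton heap `p ↦ v`. -/
def singleH {α : Type} (p : ℕ) (v : Node α) : Heap α :=
  fun q => if q = p then some v else none

/-- Domain of a heap. -/
def hDom {α : Type} (π : Heap α) : Set ℕ := { q : ℕ | (π q).isSome }

/-- `dom(π) ∪ {null}` as a set of pointer-or-null values. -/
def domP {α : Type} (π : Heap α) : Set (Option ℕ) :=
  insert none { q : Option ℕ | ∃ n : ℕ, q = some n ∧ (π n).isSome }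

/-- The representation relation `π, p ⊨ e`. -/
inductive HeapRepr {α : Type} : Heap α → ℕ → RE α → Prop where
  | eps {p : ℕ} : HeapRepr (singleH p Node.eps) p RE.eps
  | ch {p : ℕ} {a : α} : HeapRepr (singleH p (Node.ch a)) p (RE.ch a)
  | alt {π π₁ π₂ : Heap α} {p p₁ p₂ : ℕ} {e₁ e₂ : RE α} :
      π = hUnion (singleH p (Node.alt p₁ p₂)) (hUnion π₁ π₂) →
      hDisj (singleH p (Node.alt p₁ p₂)) π₁ →
      hDisj (singleH p (Node.alt p₁ p₂)) π₂ →
      hDisj π₁ π₂ →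
      HeapRepr π₁ p₁ e₁ → HeapRepr π₂ p₂ e₂ → HeapRepr π p (RE.alt e₁ e₂)
  | seq {π π₁ π₂ : Heap α} {p p₁ p₂ : ℕ} {e₁ e₂ : RE α} :
      π = hUnion (singleH p (Node.seq p₁ p₂)) (hUnion π₁ π₂) →
      hDisj (singleH p (Node.seq p₁ p₂)) π₁ →
      hDisj (singleH p (Node.seq p₁ p₂)) π₂ →
      hDisj π₁ π₂ →
      HeapRepr π₁ p₁ e₁ → HeapRepr π₂ p₂ e₂ → HeapRepr π p (RE.seq e₁ e₂)
  | star {π π₁ : Heap α} {p p₁ : ℕ} {e₁ : RE α} :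
      π = hUnion (singleH p (Node.star p₁)) π₁ →
      hDisj (singleH p (Node.star p₁)) π₁ →
      HeapRepr π₁ p₁ e₁ → HeapRepr π p (RE.star e₁)

/-- `π ⊨ k`: the continuation function `k : dom(π) → dom(π) ∪ {null}` (with root `p₀`). -/
def KOk {α : Type} (π : Heap α) (k : ℕ → Option ℕ) (p₀ : ℕ) : Prop :=
  (∀ p : ℕ, (π p).isSome → k p = none ∨ ∃ q : ℕ, k p = some q ∧ (π q).isSome) ∧
  (∀ p q₁ q₂ : ℕ, π p = some (Node.alt q₁ q₂) → k q₁ = k p ∧ k q₂ = k p) ∧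
  (∀ p q₁ q₂ : ℕ, π p = some (Node.seq q₁ q₂) → k q₁ = some q₂ ∧ k q₂ = k p) ∧
  (∀ p q₁ : ℕ, π p = some (Node.star q₁) → k q₁ = some p) ∧
  k p₀ = none

/-- Unlabeled pointer transitions `p ⇀ q` relative to `π` and `k`. -/
inductive PStep {α : Type} (π : Heap α) (k : ℕ → Option ℕ) :
    Option ℕ → Option ℕ → Prop where
  | altL {p q₁ q₂ : ℕ} : π p = some (Node.alt q₁ q₂) → PStep π k (some p) (some q₁)
  | altR {p q₁ q₂ : ℕ} : π p = some (Node.alt q₁ q₂) → PStep π k (some p) (some q₂)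
  | seq {p q₁ q₂ : ℕ} : π p = some (Node.seq q₁ q₂) → PStep π k (some p) (some q₁)
  | starIn {p q₁ : ℕ} : π p = some (Node.star q₁) → PStep π k (some p) (some q₁)
  | starOut {p q₁ : ℕ} : π p = some (Node.star q₁) → PStep π k (some p) (k p)
  | eps {p : ℕ} : π p = some Node.eps → PStep π k (some p) (k p)

/-- Labeled pointer transitions `p ⇀ᵃ k(p)` relative to `π` and `k`. -/
inductive PStepA {α : Type} (π : Heap α) (k : ℕ → Option ℕ) (a : α) :
    Option ℕ → Option ℕ → Prop where
  | ch {p : ℕ} : π p = some (Node.ch a) → PStepA π k a (some p) (k p)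

/-- Transitions of the PWπ machine on configurations `⟨p | w⟩`. -/
inductive PWStep {α : Type} (π : Heap α) (k : ℕ → Option ℕ) :
    Option ℕ × List α → Option ℕ × List α → Prop where
  | silent {p q : Option ℕ} {w : List α} : PStep π k p q → PWStep π k (p, w) (q, w)
  | read {a : α} {p q : Option ℕ} {w : List α} :
      PStepA π k a p q → PWStep π k (p, a :: w) (q, w)

/-- `evolve(S)`: all character nodes reachable from `S` by `⇀*`. -/
def evolve {α : Type} (π : Heap α) (k : ℕ → Option ℕ) (S : Set (Option ℕ)) :
    Set (Option ℕ) :=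
  { q : Option ℕ | ∃ (n : ℕ) (a : α), q = some n ∧ π n = some (Node.ch a) ∧
      ∃ p ∈ S, Relation.ReflTransGen (PStep π k) p q }

/-- The lockstep transition `S ⟹ evolve(S)` on pointer sets. -/
def EvolveRel {α : Type} (π : Heap α) (k : ℕ → Option ℕ)
    (S S' : Set (Option ℕ)) : Prop :=
  S' = evolve π k S

/-- The lockstep transition `S ⟹ᵃ S'` on pointer sets. -/
def CharRel {α : Type} (π : Heap α) (k : ℕ → Option ℕ) (a : α)
    (S S' : Set (Option ℕ)) : Prop :=
  S' = { q : Option ℕ | ∃ p ∈ S, PStepA π k a p q }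

/-- Transitions of the generic lockstep machine on configurations `⟨S | w⟩`. -/
inductive LockStep {α : Type} (π : Heap α) (k : ℕ → Option ℕ) :
    Set (Option ℕ) × List α → Set (Option ℕ) × List α → Prop where
  | evolve {S S' : Set (Option ℕ)} {w : List α} :
      EvolveRel π k S S' → LockStep π k (S, w) (S', w)
  | read {S S' : Set (Option ℕ)} {a : α} {w : List α} :
      CharRel π k a S S' → LockStep π k (S, a :: w) (S', w)

/-- The child relation on pointers of a heap: `q` is a pointer argument of the node at `p`. -/
def Child {α : Type} (π : Heap α) (p q : ℕ) : Prop :=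
  (∃ q₂ : ℕ, π p = some (Node.alt q q₂)) ∨ (∃ q₁ : ℕ, π p = some (Node.alt q₁ q)) ∨
  (∃ q₂ : ℕ, π p = some (Node.seq q q₂)) ∨ (∃ q₁ : ℕ, π p = some (Node.seq q₁ q)) ∨
  π p = some (Node.star q)

/-- The subtree of `π` rooted at `q` represents `e`. -/
def ReprSub {α : Type} (π : Heap α) (q : ℕ) (e : RE α) : Prop :=
  ∃ π₁ π₂ : Heap α, hDisj π₁ π₂ ∧ π = hUnion π₁ π₂ ∧ HeapRepr π₁ q e

/-- `StackOf π k p l`: the continuation stack reconstructed from `p` by following `k` is `l`. -/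
inductive StackOf {α : Type} (π : Heap α) (k : ℕ → Option ℕ) :
    ℕ → List (RE α) → Prop where
  | nil {p : ℕ} : k p = none → StackOf π k p []
  | cons {p q : ℕ} {e' : RE α} {l : List (RE α)} :
      k p = some q → ReprSub π q e' → StackOf π k q l → StackOf π k p (e' :: l)

/-- Processes of the process calculus.  Messages `p̄` are on pointer-or-null channels;
receivers `p.M` listen on non-null pointer channels; `a.M` is an `n`-way sync prefix. -/
inductive Proc (α : Type) : Type where
  | msg (p : Option ℕ) : Proc α
  | par (M₁ M₂ : Proc α) : Proc α
  | recv (p : ℕ) (M : Proc α) : Proc α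
  | sync (a : α) (M : Proc α) : Proc α

/-- Structural congruence: associativity/commutativity of `∥`. -/
inductive PCong {α : Type} : Proc α → Proc α → Prop where
  | refl (M : Proc α) : PCong M M
  | symm {M N : Proc α} : PCong M N → PCong N M
  | trans {M N K : Proc α} : PCong M N → PCong N K → PCong M K
  | parComm (M N : Proc α) : PCong (Proc.par M N) (Proc.par N M)
  | parAssoc (M N K : Proc α) :
      PCong (Proc.par (Proc.par M N) K) (Proc.par M (Proc.par N K))
  | par {M M' N N' : Proc α} :
      PCong M M' → PCong N N' → PCong (Proc.par M N) (Proc.par M' N')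
  | recv (p : ℕ) {M M' : Proc α} : PCong M M' → PCong (Proc.recv p M) (Proc.recv p M')
  | sync (a : α) {M M' : Proc α} : PCong M M' → PCong (Proc.sync a M) (Proc.sync a M')

/-- Silent transitions `M → M'`: handshake communication, closed under parallel
context and structural congruence. -/
inductive PSilent {α : Type} : Proc α → Proc α → Prop where
  | comm (p : ℕ) (M : Proc α) :
      PSilent (Proc.par (Proc.recv p M) (Proc.msg (some p))) M
  | parL {M M' : Proc α} (N : Proc α) :
      PSilent M M' → PSilent (Proc.par M N) (Proc.par M' N)
  | congr {M M₁ M₂ M' : Proc α} :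
      PCong M M₁ → PSilent M₁ M₂ → PCong M₂ M' → PSilent M M'

/-- `parList M [N₁, …, Nₙ] = M ∥ N₁ ∥ ⋯ ∥ Nₙ`. -/
def parList {α : Type} : Proc α → List (Proc α) → Proc α
  | M, [] => M
  | M, N :: l => Proc.par M (parList N l)

/-- Labeled transitions `M →ᵃ M'`: `n`-way synchronization on `a` (discarding the rest),
closed under structural congruence. -/
inductive PLabel {α : Type} (a : α) : Proc α → Proc α → Prop where
  | sync (M₀ : Proc α) (Ms : List (Proc α)) (M' : Proc α) :
      (¬ ∃ M'' M''' : Proc α, PCong M' (Proc.par (Proc.sync a M'') M''')) →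
      (∀ N : Proc α, ¬ PSilent M' N) →
      PLabel a (Proc.par (parList (Proc.sync a M₀) (Ms.map (Proc.sync a))) M')
        (parList M₀ Ms)
  | congr {M M₁ M₂ M' : Proc α} :
      PCong M M₁ → PLabel a M₁ M₂ → PCong M₂ M' → PLabel a M M'

/-- The translation `⟦p⟧π` of a heap node into a process. -/
def transNode {α : Type} (k : ℕ → Option ℕ) (p : ℕ) : Node α → Proc α
  | Node.alt q₁ q₂ => Proc.recv p (Proc.par (Proc.msg (some q₁)) (Proc.msg (some q₂)))
  | Node.seq q₁ _ => Proc.recv p (Proc.msg (some q₁))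
  | Node.star q₁ => Proc.recv p (Proc.par (Proc.msg (some q₁)) (Proc.msg (k p)))
  | Node.eps => Proc.recv p (Proc.msg (k p))
  | Node.ch a => Proc.recv p (Proc.sync a (Proc.msg (k p)))

/-- The process for the node at pointer `p` of heap `π` (dummy if `p ∉ dom(π)`). -/
def nodeProc {α : Type} (π : Heap α) (k : ℕ → Option ℕ) (p : ℕ) : Proc α :=
  match π p with
  | some v => transNode k p v
  | none => Proc.msg none

/-- `M` is (a representation of) the translation `⟦π⟧`: the parallel composition
of `⟦p⟧π` over all `p ∈ dom(π)`. -/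
def HeapProcOf {α : Type} (π : Heap α) (k : ℕ → Option ℕ) (M : Proc α) : Prop :=
  ∃ (p : ℕ) (l : List ℕ), (p :: l).Nodup ∧ (∀ q : ℕ, (π q).isSome ↔ q ∈ p :: l) ∧
    M = parList (nodeProc π k p) (l.map (nodeProc π k))

/-- `M` is (a representation of) `S̄`: the parallel composition of the messages
`p̄` for `p ∈ S`. -/
def MsgsOf {α : Type} (S : Set (Option ℕ)) (M : Proc α) : Prop :=
  ∃ (p : Option ℕ) (l : List (Option ℕ)), (p :: l).Nodup ∧
    (∀ q : Option ℕ, q ∈ S ↔ q ∈ p :: l) ∧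
    M = parList (Proc.msg p) (l.map Proc.msg)

/-- Matching for a list of expressions against a split of the word. -/
inductive KM {α : Type} : List (RE α) → List α → Prop where
  | nil : KM [] []
  | cons {e : RE α} {w₁ : List α} {k : List (RE α)} {w₂ : List α} :
      Matches e w₁ → KM k w₂ → KM (e :: k) (w₁ ++ w₂)

lemma run_of_matches {α : Type} {e : RE α} {w : List α} (h : Matches e w) :
    ∀ (k : List (RE α)) (w' : List α),
      Relation.ReflTransGen EKWStep ((e, k, w ++ w') : EKWConfig α) (RE.eps, k, w') := by
  induction h with
  | eps => intro k w'; exact Relation.ReflTransGen.refl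
  | ch a => intro k w'; exact Relation.ReflTransGen.single EKWStep.ch
  | @seq e₁ e₂ w₁ w₂ h1 h2 ih1 ih2 =>
      intro k w'
      rw [List.append_assoc]
      exact Relation.ReflTransGen.head EKWStep.seq
        ((ih1 (e₂ :: k) (w₂ ++ w')).trans
          (Relation.ReflTransGen.head EKWStep.pop (ih2 k w')))
  | starNil => intro k w'; exact Relation.ReflTransGen.single EKWStep.starOut
  | @starCons e w₁ w₂ h1 h2 ih1 ih2 =>
      intro k w'
      rw [List.append_assoc]
      exact Relation.ReflTransGen.head EKWStep.starIn
        ((ih1 (RE.star e :: k) (w₂ ++ w')).trans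
          (Relation.ReflTransGen.head EKWStep.pop (ih2 k w')))
  | altL h ih =>
      intro k w'
      exact Relation.ReflTransGen.head EKWStep.altL (ih k w')
  | altR h ih =>
      intro k w'
      exact Relation.ReflTransGen.head EKWStep.altR (ih k w')

lemma km_of_run {α : Type} : ∀ c : EKWConfig α,
    Relation.ReflTransGen EKWStep c ((RE.eps, [], []) : EKWConfig α) →
    KM (c.1 :: c.2.1) c.2.2 := by
  intro c h
  induction h using Relation.ReflTransGen.head_induction_on with
  | refl => exact KM.cons Matches.eps KM.nil
  | head step _ ih =>
      cases step with
      | altL => cases ih with | cons h1 h2 => exact KM.cons (Matches.altL h1) h2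
      | altR => cases ih with | cons h1 h2 => exact KM.cons (Matches.altR h1) h2
      | seq =>
          cases ih with
          | cons h1 h2 =>
            cases h2 with
            | cons h2 h3 =>
              simpa using KM.cons (Matches.seq h1 h2) h3
      | starIn =>
          cases ih with
          | cons h1 h2 =>
            cases h2 with
            | cons h2 h3 =>
              simpa using KM.cons (Matches.starCons h1 h2) h3
      | starOut =>
          cases ih with
          | cons h1 h2 => cases h1; exact KM.cons Matches.starNil h2
      | ch =>
          cases ih with
          | cons h1 h2 => cases h1; exact KM.cons (Matches.ch _) h2
      | pop =>
          cases ih with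
          | cons h1 h2 => exact KM.cons (w₁ := []) Matches.eps (KM.cons h1 h2)

/-- Partial correctness of the EKW machine: `e ⊨ w` iff there is a
finite run `⟨e | [] | w⟩ →* ⟨ε | [] | ε⟩`. -/
theorem ekw_partial_correctness {α : Type} [Fintype α] (e : RE α) (w : List α) :
    Matches e w ↔
      Relation.ReflTransGen EKWStep
        ((e, ([] : List (RE α)), w) : EKWConfig α)
        ((RE.eps, ([] : List (RE α)), ([] : List α)) : EKWConfig α) := by
  constructor
  · intro h
    simpa using run_of_matches h [] []
  · intro h
    have hk := km_of_run _ h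
    cases hk with
    | cons h1 h2 => cases h2; simpa using h1

end RegexMachines
end

section
/- The EKW machine can diverge on a valid input: for any character a ∈ Σ, the configuration ⟨(a*)* | [] | a⟩ reaches itself in exactly three transition steps (via ⟨a* | [(a*)*] | a⟩ and ⟨ε | [(a*)*] | a⟩); consequently there is an infinite transition sequence of the EKW machine starting from ⟨(a*)* | [] | a⟩. -/
set_option autoImplicit false

namespace RegexMachines

/-- The EKW machine can diverge: `⟨(a*)* | [] | a⟩` reaches itself in
exactly three steps (via `⟨a* | [(a*)*] | a⟩` and `⟨ε | [(a*)*] | a⟩`); consequently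
there is an infinite transition sequence from `⟨(a*)* | [] | a⟩`. -/
theorem ekw_divergence {α : Type} [Fintype α] (a : α) :
    (EKWStep ((((RE.ch a).star.star), ([] : List (RE α)), [a]) : EKWConfig α)
        (((RE.ch a).star, [(RE.ch a).star.star], [a]) : EKWConfig α) ∧
     EKWStep (((RE.ch a).star, [(RE.ch a).star.star], [a]) : EKWConfig α)
        ((RE.eps, [(RE.ch a).star.star], [a]) : EKWConfig α) ∧
     EKWStep ((RE.eps, [(RE.ch a).star.star], [a]) : EKWConfig α)
        (((RE.ch a).star.star, ([] : List (RE α)), [a]) : EKWConfig α)) ∧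
    ∃ f : ℕ → EKWConfig α,
      f 0 = (((RE.ch a).star.star), ([] : List (RE α)), [a]) ∧
      ∀ n : ℕ, EKWStep (f n) (f (n + 1)) := by

  refine ⟨⟨EKWStep.starIn, EKWStep.starOut, EKWStep.pop⟩, ?_⟩
  refine ⟨fun n => match n % 3 with
    | 0 => (((RE.ch a).star.star), ([] : List (RE α)), [a])
    | 1 => ((RE.ch a).star, [(RE.ch a).star.star], [a])
    | _ => (RE.eps, [(RE.ch a).star.star], [a]), rfl, fun n => ?_⟩
  have h : (n + 1) % 3 = (n % 3 + 1) % 3 := by omega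
  have h3 : n % 3 = 0 ∨ n % 3 = 1 ∨ n % 3 = 2 := by omega
  rcases h3 with h0 | h0 | h0 <;> simp only [h, h0]
  · exact EKWStep.starIn
  · exact EKWStep.starOut
  · exact EKWStep.pop


end RegexMachines
end

section
/- Acyclicity of the child-pointer chain: if π,p ⊨ e, then the child relation on dom(π) (where q is a child of p when π(p) is a node (p₁|p₂), (p₁•p₂) or (p₁)* and q is one of the pointer arguments p₁, p₂) admits no cycle; in particular there is no nonempty chain of child steps from any pointer in dom(π) back to itself. -/
set_option autoImplicit false

namespace RegexMachines

lemma singleH_self {α : Type} (p : ℕ) (v : Node α) : singleH p v p = some v := by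
  simp [singleH]

lemma hUnion_some_left {α : Type} {π₁ π₂ : Heap α} {q : ℕ} {v : Node α}
    (h : π₁ q = some v) : hUnion π₁ π₂ q = some v := by
  simp [hUnion, h]

lemma hUnion_none_left {α : Type} {π₁ π₂ : Heap α} {q : ℕ}
    (h : π₁ q = none) : hUnion π₁ π₂ q = π₂ q := by
  simp [hUnion, h]

lemma child_mono {α : Type} {π π' : Heap α} {a b : ℕ} (h : π' a = π a) :
    Child π a b → Child π' a b := by
  intro hc; unfold Child at hc ⊢; rw [h]; exact hc

lemma repr_dom {α : Type} {π : Heap α} {p : ℕ} {e : RE α}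
    (h : HeapRepr π p e) : (π p).isSome := by
  induction h with
  | eps => simp [singleH]
  | ch => simp [singleH]
  | alt hπ _ _ _ _ _ _ _ =>
      subst hπ; rw [hUnion_some_left (singleH_self _ _)]; rfl
  | seq hπ _ _ _ _ _ _ _ =>
      subst hπ; rw [hUnion_some_left (singleH_self _ _)]; rfl
  | star hπ _ _ _ =>
      subst hπ; rw [hUnion_some_left (singleH_self _ _)]; rfl

lemma repr_rank {α : Type} {π : Heap α} {p : ℕ} {e : RE α}
    (h : HeapRepr π p e) :
    ∃ f : ℕ → ℕ, ∀ a b : ℕ, Child π a b → (π b).isSome ∧ f b < f a := by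
  induction h with
  | @eps p =>
      refine ⟨fun _ => 0, fun a b hc => ?_⟩
      exfalso
      rcases hc with ⟨_, h⟩ | ⟨_, h⟩ | ⟨_, h⟩ | ⟨_, h⟩ | h <;>
        · simp only [singleH] at h; split_ifs at h <;> simp_all
  | @ch p a =>
      refine ⟨fun _ => 0, fun a b hc => ?_⟩
      exfalso
      rcases hc with ⟨_, h⟩ | ⟨_, h⟩ | ⟨_, h⟩ | ⟨_, h⟩ | h <;>
        · simp only [singleH] at h; split_ifs at h <;> simp_all
  | @alt π π₁ π₂ p p₁ p₂ e₁ e₂ hπ d1 d2 d3 r1 r2 ih1 ih2 =>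
      obtain ⟨f₁, hf₁⟩ := ih1
      obtain ⟨f₂, hf₂⟩ := ih2
      have hπ₁p : π₁ p = none := by
        rcases d1 p with h | h
        · rw [singleH_self] at h; exact absurd h (by simp)
        · exact h
      have hπ₂p : π₂ p = none := by
        rcases d2 p with h | h
        · rw [singleH_self] at h; exact absurd h (by simp)
        · exact h
      have heq1 : ∀ q : ℕ, (π₁ q).isSome → π q = π₁ q := by
        intro q hq
        have hqp : q ≠ p := fun hh => by rw [hh, hπ₁p] at hq; simp at hq
        rw [hπ, hUnion_none_left (by simp [singleH, hqp])]
        obtain ⟨v, hv⟩ := Option.isSome_iff_exists.mp hq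
        rw [hUnion_some_left hv, hv]
      have heq2 : ∀ q : ℕ, (π₂ q).isSome → π₁ q = none → π q = π₂ q := by
        intro q hq hq1
        have hqp : q ≠ p := fun hh => by rw [hh, hπ₂p] at hq; simp at hq
        rw [hπ, hUnion_none_left (by simp [singleH, hqp]), hUnion_none_left hq1]
      refine ⟨fun b => if (π₁ b).isSome then f₁ b else
        if (π₂ b).isSome then f₂ b else f₁ p₁ + f₂ p₂ + 1, fun a b hc => ?_⟩
      have hp1 : (π₁ p₁).isSome := repr_dom r1
      have hp2 : (π₂ p₂).isSome := repr_dom r2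
      by_cases ha1 : (π₁ a).isSome
      · have hc1 : Child π₁ a b := child_mono (heq1 a ha1).symm hc
        obtain ⟨hb, hlt⟩ := hf₁ a b hc1
        refine ⟨by rw [heq1 b hb]; exact hb, ?_⟩
        simp [ha1, hb, hlt]
      · by_cases ha2 : (π₂ a).isSome
        · have hπ1a : π₁ a = none := Option.not_isSome_iff_eq_none.mp ha1
          have hc2 : Child π₂ a b := child_mono (heq2 a ha2 hπ1a).symm hc
          obtain ⟨hb, hlt⟩ := hf₂ a b hc2
          have hb1 : π₁ b = none := by
            rcases d3 b with h | h
            · exact h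
            · rw [h] at hb; simp at hb
          refine ⟨by rw [heq2 b hb hb1]; exact hb, ?_⟩
          simp [ha1, ha2, hb, hb1, hlt]
        · -- a must be p
          have hap : a = p := by
            by_contra hap
            have hnone : π a = none := by
              rw [hπ, hUnion_none_left (by simp [singleH, hap]),
                hUnion_none_left (Option.not_isSome_iff_eq_none.mp ha1)]
              exact Option.not_isSome_iff_eq_none.mp ha2
            rcases hc with ⟨_, h⟩ | ⟨_, h⟩ | ⟨_, h⟩ | ⟨_, h⟩ | h <;>
              rw [hnone] at h <;> exact absurd h (by simp)
          subst hap
          have hpa : π a = some (Node.alt p₁ p₂) := by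
            rw [hπ, hUnion_some_left (singleH_self _ _)]
          have hb12 : b = p₁ ∨ b = p₂ := by
            rcases hc with ⟨_, h⟩ | ⟨_, h⟩ | ⟨_, h⟩ | ⟨_, h⟩ | h <;>
              rw [hpa] at h
            · injection h with h'; injection h' with h1 h2; exact Or.inl h1.symm
            · injection h with h'; injection h' with h1 h2; exact Or.inr h2.symm
            · exact absurd h (by simp)
            · exact absurd h (by simp)
            · exact absurd h (by simp)
          rcases hb12 with rfl | rfl
          · refine ⟨by rw [heq1 b hp1]; exact hp1, ?_⟩
            simp [ha1, ha2, hp1]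
          · have hb1 : π₁ b = none := by
              rcases d3 b with h | h
              · exact h
              · rw [h] at hp2; simp at hp2
            refine ⟨by rw [heq2 b hp2 hb1]; exact hp2, ?_⟩
            simp [ha1, ha2, hp2, hb1]
  | @seq π π₁ π₂ p p₁ p₂ e₁ e₂ hπ d1 d2 d3 r1 r2 ih1 ih2 =>
      obtain ⟨f₁, hf₁⟩ := ih1
      obtain ⟨f₂, hf₂⟩ := ih2
      have hπ₁p : π₁ p = none := by
        rcases d1 p with h | h
        · rw [singleH_self] at h; exact absurd h (by simp)
        · exact h
      have hπ₂p : π₂ p = none := by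
        rcases d2 p with h | h
        · rw [singleH_self] at h; exact absurd h (by simp)
        · exact h
      have heq1 : ∀ q : ℕ, (π₁ q).isSome → π q = π₁ q := by
        intro q hq
        have hqp : q ≠ p := fun hh => by rw [hh, hπ₁p] at hq; simp at hq
        rw [hπ, hUnion_none_left (by simp [singleH, hqp])]
        obtain ⟨v, hv⟩ := Option.isSome_iff_exists.mp hq
        rw [hUnion_some_left hv, hv]
      have heq2 : ∀ q : ℕ, (π₂ q).isSome → π₁ q = none → π q = π₂ q := by
        intro q hq hq1
        have hqp : q ≠ p := fun hh => by rw [hh, hπ₂p] at hq; simp at hq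
        rw [hπ, hUnion_none_left (by simp [singleH, hqp]), hUnion_none_left hq1]
      refine ⟨fun b => if (π₁ b).isSome then f₁ b else
        if (π₂ b).isSome then f₂ b else f₁ p₁ + f₂ p₂ + 1, fun a b hc => ?_⟩
      have hp1 : (π₁ p₁).isSome := repr_dom r1
      have hp2 : (π₂ p₂).isSome := repr_dom r2
      by_cases ha1 : (π₁ a).isSome
      · have hc1 : Child π₁ a b := child_mono (heq1 a ha1).symm hc
        obtain ⟨hb, hlt⟩ := hf₁ a b hc1
        refine ⟨by rw [heq1 b hb]; exact hb, ?_⟩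
        simp [ha1, hb, hlt]
      · by_cases ha2 : (π₂ a).isSome
        · have hπ1a : π₁ a = none := Option.not_isSome_iff_eq_none.mp ha1
          have hc2 : Child π₂ a b := child_mono (heq2 a ha2 hπ1a).symm hc
          obtain ⟨hb, hlt⟩ := hf₂ a b hc2
          have hb1 : π₁ b = none := by
            rcases d3 b with h | h
            · exact h
            · rw [h] at hb; simp at hb
          refine ⟨by rw [heq2 b hb hb1]; exact hb, ?_⟩
          simp [ha1, ha2, hb, hb1, hlt]
        · have hap : a = p := by
            by_contra hap
            have hnone : π a = none := by
              rw [hπ, hUnion_none_left (by simp [singleH, hap]),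
                hUnion_none_left (Option.not_isSome_iff_eq_none.mp ha1)]
              exact Option.not_isSome_iff_eq_none.mp ha2
            rcases hc with ⟨_, h⟩ | ⟨_, h⟩ | ⟨_, h⟩ | ⟨_, h⟩ | h <;>
              rw [hnone] at h <;> exact absurd h (by simp)
          subst hap
          have hpa : π a = some (Node.seq p₁ p₂) := by
            rw [hπ, hUnion_some_left (singleH_self _ _)]
          have hb12 : b = p₁ ∨ b = p₂ := by
            rcases hc with ⟨_, h⟩ | ⟨_, h⟩ | ⟨_, h⟩ | ⟨_, h⟩ | h <;>
              rw [hpa] at h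
            · exact absurd h (by simp)
            · exact absurd h (by simp)
            · injection h with h'; injection h' with h1 h2; exact Or.inl h1.symm
            · injection h with h'; injection h' with h1 h2; exact Or.inr h2.symm
            · exact absurd h (by simp)
          rcases hb12 with rfl | rfl
          · refine ⟨by rw [heq1 b hp1]; exact hp1, ?_⟩
            simp [ha1, ha2, hp1]
          · have hb1 : π₁ b = none := by
              rcases d3 b with h | h
              · exact h
              · rw [h] at hp2; simp at hp2
            refine ⟨by rw [heq2 b hp2 hb1]; exact hp2, ?_⟩
            simp [ha1, ha2, hp2, hb1]
  | @star π π₁ p p₁ e₁ hπ d1 r1 ih1 =>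
      obtain ⟨f₁, hf₁⟩ := ih1
      have hπ₁p : π₁ p = none := by
        rcases d1 p with h | h
        · rw [singleH_self] at h; exact absurd h (by simp)
        · exact h
      have heq1 : ∀ q : ℕ, (π₁ q).isSome → π q = π₁ q := by
        intro q hq
        have hqp : q ≠ p := fun hh => by rw [hh, hπ₁p] at hq; simp at hq
        rw [hπ, hUnion_none_left (by simp [singleH, hqp])]
      refine ⟨fun b => if (π₁ b).isSome then f₁ b else f₁ p₁ + 1,
        fun a b hc => ?_⟩
      have hp1 : (π₁ p₁).isSome := repr_dom r1
      by_cases ha1 : (π₁ a).isSome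
      · have hc1 : Child π₁ a b := child_mono (heq1 a ha1).symm hc
        obtain ⟨hb, hlt⟩ := hf₁ a b hc1
        refine ⟨by rw [heq1 b hb]; exact hb, ?_⟩
        simp [ha1, hb, hlt]
      · have hap : a = p := by
          by_contra hap
          have hnone : π a = none := by
            rw [hπ, hUnion_none_left (by simp [singleH, hap])]
            exact Option.not_isSome_iff_eq_none.mp ha1
          rcases hc with ⟨_, h⟩ | ⟨_, h⟩ | ⟨_, h⟩ | ⟨_, h⟩ | h <;>
            rw [hnone] at h <;> exact absurd h (by simp)
        subst hap
        have hpa : π a = some (Node.star p₁) := by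
          rw [hπ, hUnion_some_left (singleH_self _ _)]
        have hb1 : b = p₁ := by
          rcases hc with ⟨_, h⟩ | ⟨_, h⟩ | ⟨_, h⟩ | ⟨_, h⟩ | h <;>
            rw [hpa] at h
          · exact absurd h (by simp)
          · exact absurd h (by simp)
          · exact absurd h (by simp)
          · exact absurd h (by simp)
          · injection h with h'; injection h' with h1; exact h1.symm
        subst hb1
        refine ⟨by rw [heq1 b hp1]; exact hp1, ?_⟩
        simp [ha1, hp1]

/-- Acyclicity of the child-pointer chain: if `π, p ⊨ e` then there is no
nonempty chain of child steps from any pointer back to itself. -/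
theorem child_acyclic {α : Type} [Fintype α] {π : Heap α} {p : ℕ} {e : RE α}
    (h : HeapRepr π p e) :
    ∀ q : ℕ, ¬ Relation.TransGen (Child π) q q := by
  obtain ⟨f, hf⟩ := repr_rank h
  intro q hq
  have key : ∀ a b : ℕ, Relation.TransGen (Child π) a b → f b < f a := by
    intro a b ht
    induction ht with
    | single hs => exact (hf _ _ hs).2
    | tail _ hs ih => exact lt_trans (hf _ _ hs).2 ih
  exact absurd (key q q hq) (lt_irrefl _)

end RegexMachines
end
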